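/- The set of 12 rules for the fork, the structure which splits one simple locomotive into two simple locomotives travelling in different directions (Table 22 of the paper, rules 241–252), is rotation-consistent. The rules are: (W,WBWBWBWWWW,W), (W,BWWWWWBBWW,W), (W,WBWBWBRWWW,W), (W,RBWBWBWWWW,R), (B,RWBWWWWWWW,B), (W,BWWBWBRBWW,W), (W,RBWRBWBBBW,W), (R,WBWBWBWWWW,W), (B,WWBWWRRWWW,B), (W,BRWBWBWBWW,R), (W,WBWWBWBBBR,W), (W,WBWBRBWWWW,W). -/

import Mathlib

/-- The three states of the cellular automaton: W (white, quiescent),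
B (blue) and R (red). -/
inductive CAState : Type
  | W | B | R
  deriving DecidableEq, Repr

open CAState

/-- A neighbourhood: a word of length 10 over {W,B,R}; positions 0-4
(paper's 1-5) are the side-neighbours, positions 5-9 (paper's 6-10)
the vertex-neighbours. -/
abbrev Nbhd := Fin 10 → CAState

/-- Build a neighbourhood from its ten letters. -/
def nb (a b c d e f g h i j : CAState) : Nbhd := ![a, b, c, d, e, f, g, h, i, j]

/-- The rotation ρ: simultaneous cyclic shift of the side part and of the
vertex part: ρ(x1…x10) = x2x3x4x5x1x7x8x9x10x6. -/
def rho (n : Nbhd) : Nbhd := fun i => n (![1, 2, 3, 4, 0, 6, 7, 8, 9, 5] i)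

/-- Two neighbourhoods are rotation-equivalent if one is ρ^k of the other. -/
def RotEquiv (n m : Nbhd) : Prop := ∃ k : ℕ, n = rho^[k] m

/-- A rule: (current state, neighbourhood, new state). -/
abbrev Rule := CAState × Nbhd × CAState

/-- A set of rules is rotation-consistent if any two rules with the same
current state and rotation-equivalent neighbourhoods have the same new
state. -/
def RotationConsistent (L : List Rule) : Prop :=
  ∀ r₁ ∈ L, ∀ r₂ ∈ L, r₁.1 = r₂.1 → RotEquiv r₁.2.1 r₂.2.1 → r₁.2.2 = r₂.2.2

/-! Since ρ⁵ = id, rotation-equivalence only has to be tested for the exponents `k < 5`; this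
makes `RotationConsistent` decidable on explicit lists, and the twelve fork rules are checked by
evaluation. -/

lemma isPeriodicPt_rho_five (n : Nbhd) : Function.IsPeriodicPt rho 5 n := by
  funext i
  fin_cases i <;> rfl

lemma rotEquiv_iff_exists_lt_five {n m : Nbhd} : RotEquiv n m ↔ ∃ k < 5, n = rho^[k] m :=
  ⟨fun ⟨k, h⟩ => ⟨k % 5, Nat.mod_lt _ (by norm_num),
      h.trans ((isPeriodicPt_rho_five m).iterate_mod_apply k).symm⟩,
    fun ⟨k, _, h⟩ => ⟨k, h⟩⟩

instance : DecidableRel RotEquiv := fun _ _ =>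
  decidable_of_iff _ rotEquiv_iff_exists_lt_five.symm

instance : DecidablePred RotationConsistent := fun L => by
  unfold RotationConsistent
  infer_instance

theorem fork_rules_rotation_consistent :
    RotationConsistent [
    (W, nb W B W B W B W W W W, W),
    (W, nb B W W W W W B B W W, W),
    (W, nb W B W B W B R W W W, W),
    (W, nb R B W B W B W W W W, R),
    (B, nb R W B W W W W W W W, B),
    (W, nb B W W B W B R B W W, W),
    (W, nb R B W R B W B B B W, W),
    (R, nb W B W B W B W W W W, W),
    (B, nb W W B W W R R W W W, B),
    (W, nb B R W B W B W B W W, R),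
    (W, nb W B W W B W B B B R, W),
    (W, nb W B W B R B W W W W, W)] := by
  decide
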